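/- Let $K_t(x)$ be the exact scale invariant kernel family on the unit ball of $\mathbb{R}^d$ given by $K_t(x) = \int_S g_{e^{-t}}(|\langle x, s\rangle|)\sigma(ds)$ where $g_u(r) = \ln_+(2/r)$ for $r \ge u$ and $g_u(r) = \ln(2/u) + 1 - r/u$ for $r < u$, and $\sigma$ is the uniform probability measure on the sphere $S$. Then for all $|x| \le 1$ and all $h, t \ge 0$: $K_{t+h}(e^{-h}x) = K_t(x) + h$. -/

import Mathlib

/-! Since `e^{-(t+h)} = e^{-h} e^{-t}`, the profile satisfies `g_{e^{-h} u}(e^{-h} r) = g_u(r) + h`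
pointwise for `r ≤ 2`, and on the unit sphere `|⟨x, s⟩| ≤ ‖x‖ ≤ 1`; integrating this identity
against the probability measure `σ` adds exactly `h`. -/

open MeasureTheory

/-- The family of profile functions `g_u`: `g_u(r) = ln₊(2/r)` for `r ≥ u` and
`g_u(r) = ln(2/u) + 1 - r/u` for `r < u`. -/
noncomputable def gker (u r : ℝ) : ℝ :=
  if u ≤ r then max (Real.log (2 / r)) 0 else Real.log (2 / u) + 1 - r / u

-- On the branch `u ≤ r`, the bound `r ≤ 2` keeps the positive part of `ln₊(2/r)` inactive.
lemma gker_mul_mul {u c r : ℝ} (hu : 0 < u) (hc : 0 < c) (hc1 : c ≤ 1) (hr : r ≤ 2) :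
    gker (c * u) (c * r) = gker u r - Real.log c := by
  by_cases hur : u ≤ r
  · have hr0 : 0 < r := hu.trans_le hur
    have hlog : 0 ≤ Real.log (2 / r) := Real.log_nonneg ((le_div_iff₀ hr0).2 (by linarith))
    have hlogc : Real.log c ≤ 0 := Real.log_nonpos hc.le hc1
    rw [gker, gker, if_pos hur, if_pos (mul_le_mul_of_nonneg_left hur hc.le),
      div_mul_eq_div_div_swap, Real.log_div (by positivity) hc.ne',
      max_eq_left hlog, max_eq_left (by linarith)]
  · have hcur : ¬c * u ≤ c * r := fun h => hur (le_of_mul_le_mul_left h hc)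
    rw [gker, gker, if_neg hur, if_neg hcur, mul_div_mul_left _ _ hc.ne', div_mul_eq_div_div_swap,
      Real.log_div (by positivity) hc.ne']
    ring

lemma measurable_gker (u : ℝ) : Measurable (gker u) := by
  unfold gker
  exact Measurable.ite measurableSet_Ici
    ((Real.measurable_log.comp (measurable_const.div measurable_id)).max measurable_const)
    (measurable_const.sub (measurable_id.div measurable_const))

lemma abs_gker_le {u r : ℝ} (hu : 0 < u) (hu1 : u ≤ 1) (hr : 0 ≤ r) :
    |gker u r| ≤ Real.log (2 / u) + 1 := by
  have hlog : 0 ≤ Real.log (2 / u) := Real.log_nonneg ((le_div_iff₀ hu).2 (by linarith))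
  by_cases hur : u ≤ r
  · have hr0 : 0 < r := hu.trans_le hur
    have hlogr : Real.log (2 / r) ≤ Real.log (2 / u) :=
      Real.log_le_log (by positivity) (div_le_div_of_nonneg_left (by norm_num) hu hur)
    rw [gker, if_pos hur, abs_of_nonneg (le_max_right _ _)]
    exact max_le (by linarith) (by linarith)
  · have hru : r / u ≤ 1 := (div_le_one hu).2 (le_of_not_ge hur)
    have hru0 : 0 ≤ r / u := by positivity
    rw [gker, if_neg hur, abs_of_nonneg (by linarith)]
    linarith

section Kernel

variable {E : Type*} [NormedAddCommGroup E] [InnerProductSpace ℝ E] [MeasurableSpace E]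
  [OpensMeasurableSpace E]

lemma integrable_gker_abs_inner (σ : Measure E) [IsFiniteMeasure σ] {u : ℝ} (hu : 0 < u)
    (hu1 : u ≤ 1) (x : E) : Integrable (fun s => gker u |inner ℝ x s|) σ :=
  .of_bound ((measurable_gker u).comp
    (continuous_const.inner continuous_id).measurable.abs).aestronglyMeasurable _
    (.of_forall fun _ => abs_gker_le hu hu1 (abs_nonneg _))

theorem integral_gker_abs_inner_smul (σ : Measure E) [IsProbabilityMeasure σ]
    (hσ : ∀ᵐ s ∂σ, ‖s‖ ≤ 1) {x : E} (hx : ‖x‖ ≤ 1) {u c : ℝ} (hu : 0 < u) (hu1 : u ≤ 1)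
    (hc : 0 < c) (hc1 : c ≤ 1) :
    ∫ s, gker (c * u) |inner ℝ (c • x) s| ∂σ = ∫ s, gker u |inner ℝ x s| ∂σ - Real.log c := by
  have hae : (fun s => gker (c * u) |inner ℝ (c • x) s|)
      =ᵐ[σ] fun s => gker u |inner ℝ x s| - Real.log c := by
    filter_upwards [hσ] with s hs
    have hxs : |inner ℝ x s| ≤ 2 := calc
      |inner ℝ x s| ≤ ‖x‖ * ‖s‖ := abs_real_inner_le_norm x s
      _ ≤ 1 * 1 := mul_le_mul hx hs (norm_nonneg s) zero_le_one
      _ ≤ 2 := by norm_num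
    rw [real_inner_smul_left, abs_mul, abs_of_pos hc, gker_mul_mul hu hc hc1 hxs]
  rw [integral_congr_ae hae, integral_sub (integrable_gker_abs_inner σ hu hu1 x)
    (integrable_const _), integral_const, probReal_univ, one_smul]

end Kernel

/-- Exact scaling of the exact scale invariant kernel
`K_t(x) = ∫_S g_{e^{-t}}(|⟨x,s⟩|) σ(ds)` over the unit sphere:
`K_{t+h}(e^{-h} x) = K_t(x) + h` for `|x| ≤ 1` and `h, t ≥ 0`. -/
theorem stmt16 (d : ℕ) (σ : Measure (EuclideanSpace ℝ (Fin d)))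
    [IsProbabilityMeasure σ] (hσ : ∀ᵐ s ∂σ, ‖s‖ = 1)
    (K : ℝ → EuclideanSpace ℝ (Fin d) → ℝ)
    (hK : ∀ t x, K t x = ∫ s, gker (Real.exp (-t)) |@inner ℝ _ _ x s| ∂σ) :
    ∀ x : EuclideanSpace ℝ (Fin d), ‖x‖ ≤ 1 → ∀ t : ℝ, 0 ≤ t → ∀ h : ℝ, 0 ≤ h →
      K (t + h) (Real.exp (-h) • x) = K t x + h := by
  intro x hx t ht h hh
  have hexp : Real.exp (-(t + h)) = Real.exp (-h) * Real.exp (-t) := by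
    rw [← Real.exp_add, neg_add, add_comm]
  rw [hK, hK, hexp, integral_gker_abs_inner_smul σ (hσ.mono fun _ hs => hs.le) hx
    (Real.exp_pos _) (Real.exp_le_one_iff.2 (neg_nonpos.2 ht)) (Real.exp_pos _)
    (Real.exp_le_one_iff.2 (neg_nonpos.2 hh)), Real.log_exp, sub_neg_eq_add]
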